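/- For an acute triangle in the Euclidean plane and every cyclic permutation (i,j,k) of (0,1,2), the quotient eᵢ/lᵢ of the distance from the circumcenter to the midpoint of the side opposite xᵢ by the length of that side equals the FEM coefficient dᵢ = lⱼ·lₖ·cos θᵢ/(4|t|); that is, eᵢ/lᵢ = lⱼ·lₖ·cos θᵢ/(4|t|). -/

import Mathlib

/-!
With `u = x₁ - x₀`, `v = x₂ - x₀` and `w = C - m₀`, the circumcenter conditions read
`⟪w, u⟫ = ⟪w, v⟫ = -⟪u, v⟫ / 2`. In the plane the area form `ω` satisfies
`⟪w, u⟫ ω(w, v) - ω(w, u) ⟪w, v⟫ = ‖w‖² ω(u, v)`, and `|ω(w, v - u)| = ‖w‖ ‖v - u‖` because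
`w ⟂ v - u`; together they give `2 e₀ |ω(u, v)| = |⟪u, v⟫| l₀`, i.e. `2 e₀ sin θ₀ = |cos θ₀| l₀`.
The triangle is the image of the unit triangle (area `1/2`) under an affine map whose linear part
has determinant `ω(u, v)`, so `|t| = l₁ l₂ sin θ₀ / 2`, and the claimed identity follows once
`cos θ₀ ≥ 0`.
-/

open EuclideanGeometry Real MeasureTheory

open Set InnerProductGeometry

open scoped Pointwise RealInnerProductSpace

namespace Orientation

variable {E : Type*} [NormedAddCommGroup E] [InnerProductSpace ℝ E] [Fact (Module.finrank ℝ E = 2)]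
  (o : Orientation ℝ E (Fin 2))

theorem abs_areaForm_eq_norm_mul_norm_mul_sin_angle (x y : E) :
    |o.areaForm x y| = ‖x‖ * ‖y‖ * Real.sin (angle x y) := by
  have hlagrange := o.inner_sq_add_areaForm_sq x y
  rw [← cos_angle_mul_norm_mul_norm] at hlagrange
  have hsin : 0 ≤ ‖x‖ * ‖y‖ * Real.sin (angle x y) := by
    have := sin_angle_nonneg x y
    positivity
  rw [← sq_eq_sq₀ (abs_nonneg _) hsin, sq_abs]
  linear_combination hlagrange - (‖x‖ * ‖y‖) ^ 2 * Real.sin_sq_add_cos_sq (angle x y)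

theorem two_mul_norm_mul_abs_areaForm_of_inner_eq {u v w : E} (hu : ⟪w, u⟫ = -(⟪u, v⟫ / 2))
    (hv : ⟪w, v⟫ = -(⟪u, v⟫ / 2)) :
    2 * ‖w‖ * |o.areaForm u v| = |⟪u, v⟫| * ‖u - v‖ := by
  have hperp : ⟪w, v - u⟫ = 0 := by rw [inner_sub_right, hu, hv, sub_self]
  have hkey : ‖w‖ ^ 2 * o.areaForm u v = -(⟪u, v⟫ / 2) * o.areaForm w (v - u) := by
    rw [← o.inner_mul_areaForm_sub, hu, hv, map_sub]
    ring
  have habs := congrArg abs hkey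
  rw [abs_mul, abs_mul, o.abs_areaForm_of_orthogonal hperp, abs_neg, abs_div, abs_two,
    norm_sub_rev, abs_of_nonneg (sq_nonneg _)] at habs
  rcases (norm_nonneg w).eq_or_lt with hw | hw
  · rw [eq_comm, norm_eq_zero] at hw
    subst hw
    have huv : ⟪u, v⟫ = 0 := by
      rw [inner_zero_left] at hu
      linarith
    simp [huv]
  · refine mul_left_cancel₀ hw.ne' ?_
    linear_combination 2 * habs

end Orientation

namespace EuclideanGeometry

variable {V P : Type*} [NormedAddCommGroup V] [InnerProductSpace ℝ V] [MetricSpace P]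
  [NormedAddTorsor V P] [Fact (Module.finrank ℝ V = 2)]

theorem two_mul_dist_midpoint_mul_sin_angle {x₀ x₁ x₂ C : P} (h₁ : x₁ ≠ x₀) (h₂ : x₂ ≠ x₀)
    (hC₁ : dist C x₀ = dist C x₁) (hC₂ : dist C x₀ = dist C x₂) :
    2 * dist C (midpoint ℝ x₁ x₂) * Real.sin (∠ x₁ x₀ x₂) =
      |Real.cos (∠ x₁ x₀ x₂)| * dist x₁ x₂ := by
  set u := x₁ -ᵥ x₀
  set v := x₂ -ᵥ x₀
  set c := C -ᵥ x₀
  have hcu : 2 * ⟪c, u⟫ = ‖u‖ ^ 2 := by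
    have := congrArg (· ^ 2) hC₁
    simp only [dist_eq_norm_vsub V, ← vsub_sub_vsub_cancel_right C x₁ x₀, norm_sub_sq_real] at this
    linarith
  have hcv : 2 * ⟪c, v⟫ = ‖v‖ ^ 2 := by
    have := congrArg (· ^ 2) hC₂
    simp only [dist_eq_norm_vsub V, ← vsub_sub_vsub_cancel_right C x₂ x₀, norm_sub_sq_real] at this
    linarith
  have hw : C -ᵥ midpoint ℝ x₁ x₂ = c - (1 / 2 : ℝ) • (u + v) := by
    rw [← vsub_sub_vsub_cancel_right C _ x₀, midpoint_vsub]
    simp only [invOf_eq_inv, one_div, smul_add, c, u, v]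
  have hwu : ⟪C -ᵥ midpoint ℝ x₁ x₂, u⟫ = -(⟪u, v⟫ / 2) := by
    rw [hw, inner_sub_left, real_inner_smul_left, inner_add_left, real_inner_self_eq_norm_sq]
    linarith [real_inner_comm u c, real_inner_comm u v]
  have hwv : ⟪C -ᵥ midpoint ℝ x₁ x₂, v⟫ = -(⟪u, v⟫ / 2) := by
    rw [hw, inner_sub_left, real_inner_smul_left, inner_add_left, real_inner_self_eq_norm_sq]
    linarith [real_inner_comm v c, real_inner_comm u v]
  have : FiniteDimensional ℝ V := .of_fact_finrank_eq_two
  let o : Orientation ℝ V (Fin 2) := (Module.finBasisOfFinrankEq ℝ V Fact.out).orientation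
  have hkey := o.two_mul_norm_mul_abs_areaForm_of_inner_eq hwu hwv
  rw [o.abs_areaForm_eq_norm_mul_norm_mul_sin_angle, ← cos_angle_mul_norm_mul_norm, abs_mul,
    abs_of_nonneg (by positivity : 0 ≤ ‖u‖ * ‖v‖), vsub_sub_vsub_cancel_right,
    ← dist_eq_norm_vsub V] at hkey
  have hu : 0 < ‖u‖ := norm_pos_iff.mpr (vsub_ne_zero.mpr h₁)
  have hv : 0 < ‖v‖ := norm_pos_iff.mpr (vsub_ne_zero.mpr h₂)
  refine mul_left_cancel₀ (mul_pos hu hv).ne' ?_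
  rw [EuclideanGeometry.angle, dist_eq_norm_vsub V x₁ x₂]
  linear_combination hkey

end EuclideanGeometry

theorem volume_setOf_nonneg_nonneg_add_le_one :
    volume {p : ℝ × ℝ | 0 ≤ p.1 ∧ 0 ≤ p.2 ∧ p.1 + p.2 ≤ 1} = ENNReal.ofReal (1 / 2) := by
  set T := {p : ℝ × ℝ | 0 ≤ p.1 ∧ 0 ≤ p.2 ∧ p.1 + p.2 ≤ 1}
  have hT : MeasurableSet T :=
    (measurableSet_le measurable_const measurable_fst).inter
      ((measurableSet_le measurable_const measurable_snd).inter
        (measurableSet_le (measurable_fst.add measurable_snd) measurable_const))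
  have hslice (x : ℝ) :
      volume (Prod.mk x ⁻¹' T) = (Icc 0 1).indicator (fun x ↦ ENNReal.ofReal (1 - x)) x := by
    by_cases hx : x ∈ Icc (0 : ℝ) 1
    · have : Prod.mk x ⁻¹' T = Icc 0 (1 - x) := by
        ext y
        exact ⟨fun h ↦ ⟨h.2.1, by linarith [h.2.2]⟩, fun h ↦ ⟨hx.1, h.1, by linarith [h.2]⟩⟩
      rw [this, Real.volume_Icc, indicator_of_mem hx, sub_zero]
    · have : Prod.mk x ⁻¹' T = ∅ :=
        eq_empty_of_forall_notMem fun y h ↦ hx ⟨h.1, by linarith [h.2.1, h.2.2]⟩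
      rw [this, measure_empty, indicator_of_notMem hx]
  rw [Measure.volume_eq_prod, Measure.prod_apply hT]
  simp only [hslice]
  rw [lintegral_indicator measurableSet_Icc, ← ofReal_integral_eq_lintegral_ofReal]
  · rw [integral_Icc_eq_integral_Ioc, ← intervalIntegral.integral_of_le zero_le_one,
      intervalIntegral.integral_sub intervalIntegrable_const intervalIntegral.intervalIntegrable_id]
    norm_num
  · exact (continuous_const.sub continuous_id).integrableOn_Icc
  · exact (ae_restrict_iff' measurableSet_Icc).mpr (ae_of_all _ fun x hx ↦ sub_nonneg.mpr hx.2)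

theorem Module.Basis.det_constr {R M ι : Type*} [CommRing R] [AddCommGroup M] [Module R M]
    [DecidableEq ι] [Fintype ι] (e : Module.Basis ι R M) (v : ι → M) :
    LinearMap.det (e.constr R v) = e.det v := by
  rw [e.det_apply, e.toMatrix_eq_toMatrix_constr, LinearMap.det_toMatrix]
  rfl

namespace EuclideanSpace

instance fact_finrank_fin_two : Fact (Module.finrank ℝ (EuclideanSpace ℝ (Fin 2)) = 2) :=
  ⟨finrank_euclideanSpace_fin⟩

theorem convexHull_zero_single_single :
    convexHull ℝ {(0 : EuclideanSpace ℝ (Fin 2)), single 0 1, single 1 1} =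
      {p : EuclideanSpace ℝ (Fin 2) | 0 ≤ p 0 ∧ 0 ≤ p 1 ∧ p 0 + p 1 ≤ 1} := by
  refine Subset.antisymm (convexHull_min ?_ ?_) fun p ⟨h0, h1, h⟩ ↦ ?_
  · rintro p (rfl | rfl | rfl) <;> simp
  · rintro x ⟨hx0, hx1, hx⟩ y ⟨hy0, hy1, hy⟩ a b ha hb hab
    simp only [mem_ofPred_eq, PiLp.add_apply, PiLp.smul_apply, smul_eq_mul]
    refine ⟨by positivity, by positivity, ?_⟩
    linarith [mul_le_mul_of_nonneg_left hx ha, mul_le_mul_of_nonneg_left hy hb]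
  · have hmem := (convex_convexHull ℝ
        {(0 : EuclideanSpace ℝ (Fin 2)), single 0 1, single 1 1}).sum_mem
      (t := Finset.univ) (w := ![1 - p 0 - p 1, p 0, p 1]) (z := ![0, single 0 1, single 1 1])
      (fun i _ ↦ by fin_cases i <;> simp <;> linarith) (by simp [Fin.sum_univ_three]; ring)
      (fun i _ ↦ by fin_cases i <;> apply subset_convexHull <;> simp)
    convert hmem using 2
    ext i
    fin_cases i <;> simp [Fin.sum_univ_three]

theorem volume_convexHull_zero_single_single :
    volume (convexHull ℝ {(0 : EuclideanSpace ℝ (Fin 2)), single 0 1, single 1 1}) =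
      ENNReal.ofReal (1 / 2) := by
  have hpres := (volume_preserving_symm_measurableEquiv_toLp (Fin 2)).trans
    (volume_preserving_finTwoArrow ℝ)
  rw [convexHull_zero_single_single, ← volume_setOf_nonneg_nonneg_add_le_one,
    ← hpres.measure_preimage_equiv]
  rfl

theorem volume_convexHull_triangle (a b c : EuclideanSpace ℝ (Fin 2)) :
    volume (convexHull ℝ {a, b, c}) =
      ENNReal.ofReal (dist a b * dist a c * Real.sin (∠ b a c) / 2) := by
  set e := EuclideanSpace.basisFun (Fin 2) ℝ
  set L := e.toBasis.constr ℝ ![b - a, c - a]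
  have hvert : {a, b, c} = a +ᵥ L '' {0, single 0 1, single 1 1} := by
    have hL (i : Fin 2) : L (single i 1) = ![b - a, c - a] i := by
      rw [← basisFun_apply (Fin 2) ℝ i, ← OrthonormalBasis.coe_toBasis]
      exact e.toBasis.constr_basis ℝ ![b - a, c - a] i
    simp only [image_insert_eq, image_singleton, map_zero, hL, vadd_set_insert, vadd_set_singleton]
    simp
  have hdet : |LinearMap.det L| = dist a b * dist a c * Real.sin (∠ b a c) := by
    rw [Module.Basis.det_constr, ← e.toBasis.orientation.volumeForm_robust e rfl,
      ← Orientation.areaForm_to_volumeForm,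
      Orientation.abs_areaForm_eq_norm_mul_norm_mul_sin_angle, dist_comm a b, dist_comm a c,
      dist_eq_norm, dist_eq_norm]
    rfl
  rw [hvert, convexHull_vadd, measure_vadd, ← LinearMap.image_convexHull,
    Measure.addHaar_image_linearMap, volume_convexHull_zero_single_single,
    ← ENNReal.ofReal_mul (abs_nonneg _), hdet]
  ring_nf

theorem dist_midpoint_div_dist_eq_of_angle_le_pi_div_two {x₀ x₁ x₂ C : EuclideanSpace ℝ (Fin 2)}
    (h : ¬Collinear ℝ {x₀, x₁, x₂}) (hC₁ : dist C x₀ = dist C x₁) (hC₂ : dist C x₀ = dist C x₂)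
    (hθ : ∠ x₁ x₀ x₂ ≤ π / 2) :
    dist C (midpoint ℝ x₁ x₂) / dist x₁ x₂ =
      dist x₀ x₂ * dist x₀ x₁ * Real.cos (∠ x₁ x₀ x₂) /
        (4 * (volume (convexHull ℝ {x₀, x₁, x₂})).toReal) := by
  have hsin : 0 < Real.sin (∠ x₁ x₀ x₂) := sin_pos_of_not_collinear (by rwa [insert_comm])
  have hcos : 0 ≤ Real.cos (∠ x₁ x₀ x₂) :=
    cos_nonneg_of_mem_Icc ⟨by linarith [angle_nonneg x₁ x₀ x₂, pi_pos], hθ⟩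
  have hkey := two_mul_dist_midpoint_mul_sin_angle (ne₁₂_of_not_collinear h).symm
    (ne₁₃_of_not_collinear h).symm hC₁ hC₂
  rw [abs_of_nonneg hcos] at hkey
  have h₀₁ := dist_pos.mpr (ne₁₂_of_not_collinear h)
  have h₀₂ := dist_pos.mpr (ne₁₃_of_not_collinear h)
  rw [volume_convexHull_triangle, ENNReal.toReal_ofReal (by positivity),
    div_eq_div_iff (dist_pos.mpr (ne₂₃_of_not_collinear h)).ne' (by positivity)]
  linear_combination dist x₀ x₁ * dist x₀ x₂ * hkey

end EuclideanSpace

/-- For an acute triangle in the Euclidean plane and every cyclic permutation `(i,j,k)`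
of `(0,1,2)`, the quotient `eᵢ/lᵢ` (distance from the circumcenter to the midpoint of the
side opposite `xᵢ`, divided by the length of that side) equals the FEM coefficient
`dᵢ = lⱼ * lₖ * cos θᵢ / (4 * |t|)`, where `|t|` is the area of the triangle. -/
theorem dist_circumcenter_midpoint_div_side_eq_fem_coeff
    (x₀ x₁ x₂ C : EuclideanSpace ℝ (Fin 2))
    (hind : AffineIndependent ℝ ![x₀, x₁, x₂])
    (h01 : dist C x₀ = dist C x₁) (h02 : dist C x₀ = dist C x₂)
    (hθ₀ : ∠ x₁ x₀ x₂ < π / 2) (hθ₁ : ∠ x₀ x₁ x₂ < π / 2)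
    (hθ₂ : ∠ x₀ x₂ x₁ < π / 2) :
    dist C (midpoint ℝ x₁ x₂) / dist x₁ x₂ =
      dist x₀ x₂ * dist x₀ x₁ * Real.cos (∠ x₁ x₀ x₂) /
        (4 * (volume (convexHull ℝ {x₀, x₁, x₂})).toReal) ∧
    dist C (midpoint ℝ x₀ x₂) / dist x₀ x₂ =
      dist x₀ x₁ * dist x₁ x₂ * Real.cos (∠ x₀ x₁ x₂) /
        (4 * (volume (convexHull ℝ {x₀, x₁, x₂})).toReal) ∧
    dist C (midpoint ℝ x₀ x₁) / dist x₀ x₁ =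
      dist x₁ x₂ * dist x₀ x₂ * Real.cos (∠ x₀ x₂ x₁) /
        (4 * (volume (convexHull ℝ {x₀, x₁, x₂})).toReal) := by
  have h := affineIndependent_iff_not_collinear_set.mp hind
  have h₁ : ({x₁, x₀, x₂} : Set (EuclideanSpace ℝ (Fin 2))) = {x₀, x₁, x₂} := insert_comm _ _ _
  have h₂ : ({x₂, x₀, x₁} : Set (EuclideanSpace ℝ (Fin 2))) = {x₀, x₁, x₂} := by
    rw [insert_comm, pair_comm]
  refine ⟨EuclideanSpace.dist_midpoint_div_dist_eq_of_angle_le_pi_div_two h h01 h02 hθ₀.le, ?_, ?_⟩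
  · have := EuclideanSpace.dist_midpoint_div_dist_eq_of_angle_le_pi_div_two (h₁ ▸ h)
      h01.symm (h01.symm.trans h02) hθ₁.le
    rwa [h₁, dist_comm x₁ x₀, mul_comm (dist x₁ x₂)] at this
  · have := EuclideanSpace.dist_midpoint_div_dist_eq_of_angle_le_pi_div_two (h₂ ▸ h)
      h02.symm (h02.symm.trans h01) hθ₂.le
    rwa [h₂, dist_comm x₂ x₁, dist_comm x₂ x₀] at this
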